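/- Let (T, A)_ω be a DL-Lite_core weighted knowledge base, k an integer, and A a concept name. Let Ā be a fresh concept name, r, s fresh role names, A₀ a fresh concept name, and a a fresh individual name. Let T' = T ∪ {A₀ ⊑ ∃s, ∃s^- ⊑ A, A ⊑ ∃r, ∃r^- ⊑ Ā} and A' = A ∪ {A₀(a)}, and let ω' extend ω by assigning weight ∞ to A₀ ⊑ ∃s, ∃s^- ⊑ A, A ⊑ ∃r and A₀(a), and weight 1 to ∃r^- ⊑ Ā. Then (T, A)_ω ⊨_p^k ∃y A(y) if and only if (T', A')_{ω'} ⊭_c^{k+1} ∃y Ā(y). -/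

import Mathlib

namespace DL

/-! ### Syntax -/

abbrev IndName := ℕ
abbrev CName := ℕ
abbrev RName := ℕ

/-- Roles: role names and inverse roles. -/
inductive Role where
  | name : RName → Role
  | inv  : RName → Role
deriving DecidableEq

/-- `ALCHIO` concepts. -/
inductive Concept where
  | top  : Concept
  | bot  : Concept
  | atom : CName → Concept
  | nom  : IndName → Concept
  | neg  : Concept → Concept
  | conj : Concept → Concept → Concept
  | ex   : Role → Concept → Concept
deriving DecidableEq

/-- TBox axioms: concept inclusions and role inclusions. -/
inductive Axiom where
  | ci : Concept → Concept → Axiom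
  | ri : Role → Role → Axiom
deriving DecidableEq

/-- ABox assertions. -/
inductive Assertion where
  | ca : CName → IndName → Assertion
  | ra : RName → IndName → IndName → Assertion
deriving DecidableEq

/-! ### Interpretations -/

/-- A DL interpretation with domain a subset of a universe `U`.  Individual names are
interpreted via `indI` (under the standard names assumption, the individual names of the
ABox under consideration are interpreted "as themselves", i.e. injectively). -/
structure Interp (U : Type) where
  dom : Set U
  indI : IndName → U
  cI : CName → Set U
  rI : RName → Set (U × U)
  cI_sub : ∀ A, cI A ⊆ dom
  rI_sub : ∀ r p, p ∈ rI r → p.1 ∈ dom ∧ p.2 ∈ dom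

variable {U : Type}

/-- Every individual name denotes an element of the domain. -/
def Interp.Proper (I : Interp U) : Prop := ∀ a, I.indI a ∈ I.dom

def Role.interp (I : Interp U) : Role → Set (U × U)
  | Role.name r => I.rI r
  | Role.inv r  => {p | (p.2, p.1) ∈ I.rI r}

def Concept.interp (I : Interp U) : Concept → Set U
  | Concept.top => I.dom
  | Concept.bot => ∅
  | Concept.atom A => I.cI A
  | Concept.nom a => {I.indI a} ∩ I.dom
  | Concept.neg C => I.dom \ Concept.interp I C
  | Concept.conj C D => Concept.interp I C ∩ Concept.interp I D
  | Concept.ex r C => {d | ∃ e, (d, e) ∈ Role.interp I r ∧ e ∈ Concept.interp I C}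

def Assertion.sat (I : Interp U) : Assertion → Prop
  | Assertion.ca A a => I.indI a ∈ I.cI A
  | Assertion.ra r a b => (I.indI a, I.indI b) ∈ I.rI r

/-! ### Violations and cost -/

/-- Violations of a concept inclusion `C ⊑ D`. -/
def vioCI (I : Interp U) (C D : Concept) : Set U :=
  Concept.interp I C \ Concept.interp I D

/-- Violations of a role inclusion `r ⊑ s`. -/
def vioRI (I : Interp U) (r s : Role) : Set (U × U) :=
  Role.interp I r \ Role.interp I s

/-- The number of violations of an axiom. -/
noncomputable def Axiom.vioCount (I : Interp U) : Axiom → ℕ∞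
  | Axiom.ci C D => (vioCI I C D).encard
  | Axiom.ri r s => (vioRI I r s).encard

open Classical in
/-- The cost of an interpretation w.r.t. a weighted knowledge base `(T, A)` with weight
functions `wT` (on TBox axioms) and `wA` (on ABox assertions). -/
noncomputable def cost (T : Finset Axiom) (A : Finset Assertion)
    (wT : Axiom → ℕ∞) (wA : Assertion → ℕ∞) (I : Interp U) : ℕ∞ :=
  (∑ τ ∈ T, wT τ * Axiom.vioCount I τ) +
    ∑ α ∈ A, (if Assertion.sat I α then 0 else wA α)

/-! ### Queries -/

inductive Term where
  | var : ℕ → Term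
  | ind : IndName → Term
deriving DecidableEq

inductive QAtom where
  | ca : CName → Term → QAtom
  | ra : RName → Term → Term → QAtom
deriving DecidableEq

/-- A Boolean conjunctive query: a finite set of atoms, all of whose variables are
(implicitly) existentially quantified. -/
abbrev BCQ := Finset QAtom

def Term.eval (I : Interp U) (π : ℕ → U) : Term → U
  | Term.var v => π v
  | Term.ind a => I.indI a

def QAtom.sat (I : Interp U) (π : ℕ → U) : QAtom → Prop
  | QAtom.ca A t => Term.eval I π t ∈ I.cI A
  | QAtom.ra r t t' => (Term.eval I π t, Term.eval I π t') ∈ I.rI r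

/-- Satisfaction of a BCQ in an interpretation. -/
def satQ (I : Interp U) (q : BCQ) : Prop :=
  ∃ π : ℕ → U, (∀ v, π v ∈ I.dom) ∧ ∀ a ∈ q, QAtom.sat I π a

/-- An instance query is a BCQ with a single atom. -/
def IsIQ (q : BCQ) : Prop := ∃ a : QAtom, q = {a}

/-! ### Cost-based semantics -/

/-- `k`-satisfiability: some interpretation has cost at most `k`. -/
def ksat (T : Finset Axiom) (A : Finset Assertion)
    (wT : Axiom → ℕ∞) (wA : Assertion → ℕ∞) (k : ℕ) : Prop :=
  ∃ (U : Type) (I : Interp U), I.Proper ∧ cost T A wT wA I ≤ (k : ℕ∞)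

/-- `K ⊨ₚᵏ q`: some interpretation of cost at most `k` satisfies `q`. -/
def satP (T : Finset Axiom) (A : Finset Assertion)
    (wT : Axiom → ℕ∞) (wA : Assertion → ℕ∞) (k : ℕ) (q : BCQ) : Prop :=
  ∃ (U : Type) (I : Interp U), I.Proper ∧ cost T A wT wA I ≤ (k : ℕ∞) ∧ satQ I q

/-- `K ⊨꜀ᵏ q`: every interpretation of cost at most `k` satisfies `q`. -/
def satC (T : Finset Axiom) (A : Finset Assertion)
    (wT : Axiom → ℕ∞) (wA : Assertion → ℕ∞) (k : ℕ) (q : BCQ) : Prop :=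
  ∀ (U : Type) (I : Interp U), I.Proper → cost T A wT wA I ≤ (k : ℕ∞) → satQ I q

/-- The optimal cost of a weighted knowledge base. -/
noncomputable def optCost (T : Finset Axiom) (A : Finset Assertion)
    (wT : Axiom → ℕ∞) (wA : Assertion → ℕ∞) : ℕ∞ :=
  sInf {c : ℕ∞ | ∃ (U : Type) (I : Interp U), I.Proper ∧ cost T A wT wA I = c}

/-- `K ⊨ₚᵒᵖᵗ q`: some interpretation of optimal cost satisfies `q`. -/
noncomputable def satPopt (T : Finset Axiom) (A : Finset Assertion)
    (wT : Axiom → ℕ∞) (wA : Assertion → ℕ∞) (q : BCQ) : Prop :=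
  ∃ (U : Type) (I : Interp U), I.Proper ∧ cost T A wT wA I = optCost T A wT wA ∧ satQ I q

/-- `K ⊨꜀ᵒᵖᵗ q`: every interpretation of optimal cost satisfies `q`. -/
noncomputable def satCopt (T : Finset Axiom) (A : Finset Assertion)
    (wT : Axiom → ℕ∞) (wA : Assertion → ℕ∞) (q : BCQ) : Prop :=
  ∀ (U : Type) (I : Interp U), I.Proper → cost T A wT wA I = optCost T A wT wA → satQ I q

/-! ### Occurrences of symbols -/

def Role.base : Role → RName
  | Role.name r => r
  | Role.inv r => r

def Concept.cnames : Concept → Finset CName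
  | Concept.atom A => {A}
  | Concept.neg C => C.cnames
  | Concept.conj C D => C.cnames ∪ D.cnames
  | Concept.ex _ C => C.cnames
  | _ => ∅

def Concept.rnames : Concept → Finset RName
  | Concept.neg C => C.rnames
  | Concept.conj C D => C.rnames ∪ D.rnames
  | Concept.ex r C => insert r.base C.rnames
  | _ => ∅

def Concept.indNames : Concept → Finset IndName
  | Concept.nom a => {a}
  | Concept.neg C => C.indNames
  | Concept.conj C D => C.indNames ∪ D.indNames
  | Concept.ex _ C => C.indNames
  | _ => ∅

def Axiom.cnames : Axiom → Finset CName
  | Axiom.ci C D => C.cnames ∪ D.cnames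
  | Axiom.ri _ _ => ∅

def Axiom.rnames : Axiom → Finset RName
  | Axiom.ci C D => C.rnames ∪ D.rnames
  | Axiom.ri r s => {r.base, s.base}

def Axiom.indNames : Axiom → Finset IndName
  | Axiom.ci C D => C.indNames ∪ D.indNames
  | Axiom.ri _ _ => ∅

def Assertion.cnames : Assertion → Finset CName
  | Assertion.ca A _ => {A}
  | Assertion.ra _ _ _ => ∅

def Assertion.rnames : Assertion → Finset RName
  | Assertion.ca _ _ => ∅
  | Assertion.ra r _ _ => {r}

def Assertion.indNames : Assertion → Finset IndName
  | Assertion.ca _ a => {a}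
  | Assertion.ra _ a b => {a, b}

/-- The individual names occurring in an ABox. -/
def aboxInds (A : Finset Assertion) : Finset IndName := A.biUnion Assertion.indNames

/-- The individual names occurring in a KB. -/
def kbInds (T : Finset Axiom) (A : Finset Assertion) : Finset IndName :=
  T.biUnion Axiom.indNames ∪ aboxInds A

def Term.indNames : Term → Finset IndName
  | Term.var _ => ∅
  | Term.ind a => {a}

def QAtom.indNames : QAtom → Finset IndName
  | QAtom.ca _ t => t.indNames
  | QAtom.ra _ t t' => t.indNames ∪ t'.indNames

def QAtom.cnames : QAtom → Finset CName
  | QAtom.ca A _ => {A}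
  | QAtom.ra _ _ _ => ∅

def qInds (q : BCQ) : Finset IndName := q.biUnion QAtom.indNames

def qCnames (q : BCQ) : Finset CName := q.biUnion QAtom.cnames

/-! ### Sizes -/

def Concept.size : Concept → ℕ
  | Concept.top => 1
  | Concept.bot => 1
  | Concept.atom _ => 1
  | Concept.nom _ => 1
  | Concept.neg C => C.size + 1
  | Concept.conj C D => C.size + D.size + 1
  | Concept.ex _ C => C.size + 2

def Axiom.size : Axiom → ℕ
  | Axiom.ci C D => C.size + D.size + 1
  | Axiom.ri _ _ => 3

def Assertion.size : Assertion → ℕ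
  | Assertion.ca _ _ => 2
  | Assertion.ra _ _ _ => 3

def tboxSize (T : Finset Axiom) : ℕ := ∑ τ ∈ T, τ.size

def aboxSize (A : Finset Assertion) : ℕ := ∑ α ∈ A, α.size

/-! ### DL-Lite fragments -/

/-- Basic concepts: concept names and unqualified existential restrictions `∃r` (with a
possibly inverse role `r`), the latter rendered as `∃r.⊤`. -/
inductive IsBasic : Concept → Prop
  | atom (A : CName) : IsBasic (Concept.atom A)
  | ex (r : Role) : IsBasic (Concept.ex r Concept.top)

/-- A `DL-Lite_core` axiom: `B ⊑ C` or `B ⊓ C ⊑ ⊥` with `B, C` basic concepts. -/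
def IsCoreAxiom (τ : Axiom) : Prop :=
  (∃ B C, τ = Axiom.ci B C ∧ IsBasic B ∧ IsBasic C) ∨
  (∃ B C, τ = Axiom.ci (Concept.conj B C) Concept.bot ∧ IsBasic B ∧ IsBasic C)

def IsDLLiteCore (T : Finset Axiom) : Prop := ∀ τ ∈ T, IsCoreAxiom τ

/-- Concepts built from basic concepts using `¬`, `⊓` (and hence also `⊔`). -/
inductive IsBoolConcept : Concept → Prop
  | basic {C} : IsBasic C → IsBoolConcept C
  | neg {C} : IsBoolConcept C → IsBoolConcept (Concept.neg C)
  | conj {C D} : IsBoolConcept C → IsBoolConcept D → IsBoolConcept (Concept.conj C D)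

/-- A `DL-Lite_bool^H` axiom: a concept inclusion between Boolean combinations of basic
concepts, or a role inclusion. -/
def IsBoolHAxiom (τ : Axiom) : Prop :=
  (∃ C D, τ = Axiom.ci C D ∧ IsBoolConcept C ∧ IsBoolConcept D) ∨ (∃ r s, τ = Axiom.ri r s)

def IsDLLiteBoolH (T : Finset Axiom) : Prop := ∀ τ ∈ T, IsBoolHAxiom τ

/-!
From a model of `(T, A)` of cost at most `k` and a point `d ∈ X` one gets a model of
`(T', A')` by setting `a = d`, `X0 = {d}`, `s = {(d, d)}`, `r = X × {d}` and `Xb = ∅`: the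
only new violation is `d ∈ ∃r⁻ \ Xb`, so the cost grows by at most one and `Xb` stays empty.
Conversely, in a model of `(T', A')` of finite cost the infinitely weighted axioms and `X0(a)`
hold, so the `s`-successor of `a` lies in `X`; if `Xb` is empty, an `r`-successor of that
element violates `∃r⁻ ⊑ Xb`, which costs at least one and leaves at most `k` for `(T, A)`.
-/

lemma satQ_ca_var_iff (I : Interp U) (C : CName) :
    satQ I {QAtom.ca C (Term.var 0)} ↔ (I.cI C).Nonempty := by
  constructor
  · rintro ⟨π, -, hsat⟩
    exact ⟨π 0, hsat _ (Finset.mem_singleton_self _)⟩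
  · rintro ⟨d, hd⟩
    exact ⟨fun _ => d, fun _ => I.cI_sub C hd, by simpa [QAtom.sat, Term.eval] using hd⟩

section Congr

variable {I J : Interp U}

lemma Role.interp_congr (ρ : Role) (h : I.rI ρ.base = J.rI ρ.base) :
    ρ.interp I = ρ.interp J := by
  cases ρ <;> simp_all [Role.interp, Role.base]

lemma Concept.interp_congr (hdom : I.dom = J.dom) (C : Concept)
    (hc : ∀ B ∈ C.cnames, I.cI B = J.cI B) (hr : ∀ ρ ∈ C.rnames, I.rI ρ = J.rI ρ)
    (hi : ∀ b ∈ C.indNames, I.indI b = J.indI b) :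
    C.interp I = C.interp J := by
  induction C with
  | top => exact hdom
  | bot => rfl
  | atom B => exact hc B (by simp [Concept.cnames])
  | nom b => simp [Concept.interp, hdom, hi b (by simp [Concept.indNames])]
  | neg C ih => simp only [Concept.interp, hdom, ih hc hr hi]
  | conj C D ihC ihD =>
    simp only [Concept.cnames, Concept.rnames, Concept.indNames, Finset.mem_union] at hc hr hi
    simp only [Concept.interp, ihC (fun B h => hc B (.inl h)) (fun ρ h => hr ρ (.inl h))
      (fun b h => hi b (.inl h)), ihD (fun B h => hc B (.inr h)) (fun ρ h => hr ρ (.inr h))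
      (fun b h => hi b (.inr h))]
  | ex ρ C ih =>
    simp only [Concept.rnames, Finset.mem_insert] at hr
    simp only [Concept.interp, Role.interp_congr ρ (hr _ (.inl rfl)),
      ih hc (fun ρ h => hr ρ (.inr h)) hi]

lemma Axiom.vioCount_congr (hdom : I.dom = J.dom) (τ : Axiom)
    (hc : ∀ B ∈ τ.cnames, I.cI B = J.cI B) (hr : ∀ ρ ∈ τ.rnames, I.rI ρ = J.rI ρ)
    (hi : ∀ b ∈ τ.indNames, I.indI b = J.indI b) :
    τ.vioCount I = τ.vioCount J := by
  cases τ with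
  | ci C D =>
    simp only [Axiom.cnames, Axiom.rnames, Axiom.indNames, Finset.mem_union] at hc hr hi
    simp only [Axiom.vioCount, vioCI,
      Concept.interp_congr hdom C (fun B h => hc B (.inl h)) (fun ρ h => hr ρ (.inl h))
        (fun b h => hi b (.inl h)),
      Concept.interp_congr hdom D (fun B h => hc B (.inr h)) (fun ρ h => hr ρ (.inr h))
        (fun b h => hi b (.inr h))]
  | ri ρ σ =>
    simp only [Axiom.rnames, Finset.mem_insert, Finset.mem_singleton] at hr
    simp only [Axiom.vioCount, vioRI, Role.interp_congr ρ (hr _ (.inl rfl)),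
      Role.interp_congr σ (hr _ (.inr rfl))]

lemma Assertion.sat_congr (α : Assertion)
    (hc : ∀ B ∈ α.cnames, I.cI B = J.cI B) (hr : ∀ ρ ∈ α.rnames, I.rI ρ = J.rI ρ)
    (hi : ∀ b ∈ α.indNames, I.indI b = J.indI b) :
    α.sat I ↔ α.sat J := by
  cases α <;> simp_all [Assertion.sat, Assertion.cnames, Assertion.rnames, Assertion.indNames]

end Congr

lemma Axiom.vioCount_ci_eq_zero_iff (I : Interp U) (C D : Concept) :
    (Axiom.ci C D).vioCount I = 0 ↔ C.interp I ⊆ D.interp I := by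
  simp [Axiom.vioCount, vioCI, Set.sdiff_eq_empty]

section Cost

variable (T : Finset Axiom) (A : Finset Assertion) (wT : Axiom → ℕ∞)
  (wA : Assertion → ℕ∞) (I : Interp U)

lemma cost_insert_axiom {τ : Axiom} (hτ : τ ∉ T) :
    cost (insert τ T) A wT wA I = wT τ * τ.vioCount I + cost T A wT wA I := by
  simp only [cost, Finset.sum_insert hτ, add_assoc]

open Classical in
lemma cost_insert_assertion {α : Assertion} (hα : α ∉ A) :
    cost T (insert α A) wT wA I = (if α.sat I then 0 else wA α) + cost T A wT wA I := by
  simp only [cost, Finset.sum_insert hα, add_left_comm]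

lemma cost_congr_weights {wT' : Axiom → ℕ∞} {wA' : Assertion → ℕ∞}
    (hT : ∀ τ ∈ T, wT τ = wT' τ) (hA : ∀ α ∈ A, wA α = wA' α) :
    cost T A wT wA I = cost T A wT' wA' I := by
  unfold cost
  congr 1
  · exact Finset.sum_congr rfl fun τ hτ => by rw [hT τ hτ]
  · exact Finset.sum_congr rfl fun α hα => by rw [hA α hα]

lemma cost_congr_interp {J : Interp U} (hT : ∀ τ ∈ T, τ.vioCount I = τ.vioCount J)
    (hA : ∀ α ∈ A, α.sat I ↔ α.sat J) :
    cost T A wT wA I = cost T A wT wA J := by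
  unfold cost
  congr 1
  · exact Finset.sum_congr rfl fun τ hτ => by rw [hT τ hτ]
  · exact Finset.sum_congr rfl fun α hα => by rw [hA α hα]

end Cost

section Reduction

variable (X Xb X0 : CName) (r s : RName) (a : IndName)

def startAxiom : Axiom := Axiom.ci (Concept.atom X0) (Concept.ex (Role.name s) Concept.top)

def landAxiom : Axiom := Axiom.ci (Concept.ex (Role.inv s) Concept.top) (Concept.atom X)

def exitAxiom : Axiom := Axiom.ci (Concept.atom X) (Concept.ex (Role.name r) Concept.top)

def markAxiom : Axiom := Axiom.ci (Concept.ex (Role.inv r) Concept.top) (Concept.atom Xb)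

def reductionTBox (T : Finset Axiom) : Finset Axiom :=
  insert (startAxiom X0 s) (insert (landAxiom X s) (insert (exitAxiom X r)
    (insert (markAxiom Xb r) T)))

def reductionABox (A : Finset Assertion) : Finset Assertion := insert (Assertion.ca X0 a) A

def reductionWT (wT : Axiom → ℕ∞) (τ : Axiom) : ℕ∞ :=
  if τ = markAxiom Xb r then 1
  else if τ = startAxiom X0 s ∨ τ = landAxiom X s ∨ τ = exitAxiom X r then ⊤
  else wT τ

def reductionWA (wA : Assertion → ℕ∞) (α : Assertion) : ℕ∞ :=
  if α = Assertion.ca X0 a then ⊤ else wA α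

open Classical in
noncomputable def reductionPenalty (I : Interp U) : ℕ∞ :=
  ⊤ * (startAxiom X0 s).vioCount I + ⊤ * (landAxiom X s).vioCount I +
    ⊤ * (exitAxiom X r).vioCount I + (markAxiom Xb r).vioCount I +
    if (Assertion.ca X0 a).sat I then 0 else ⊤

lemma cost_reduction {T : Finset Axiom} {A : Finset Assertion} {wT : Axiom → ℕ∞}
    {wA : Assertion → ℕ∞} (hX0 : X0 ≠ X) (hXb : Xb ≠ X)
    (hX0T : ∀ τ ∈ T, X0 ∉ τ.cnames) (hX0A : ∀ α ∈ A, X0 ∉ α.cnames)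
    (hrT : ∀ τ ∈ T, r ∉ τ.rnames) (hsT : ∀ τ ∈ T, s ∉ τ.rnames) (I : Interp U) :
    cost (reductionTBox X Xb X0 r s T) (reductionABox X0 a A) (reductionWT X Xb X0 r s wT)
        (reductionWA X0 a wA) I =
      reductionPenalty X Xb X0 r s a I + cost T A wT wA I := by
  have hstart : startAxiom X0 s ∉ T := fun h =>
    hX0T _ h (by simp [startAxiom, Axiom.cnames, Concept.cnames])
  have hland : landAxiom X s ∉ T := fun h =>
    hsT _ h (by simp [landAxiom, Axiom.rnames, Concept.rnames, Role.base])
  have hexit : exitAxiom X r ∉ T := fun h =>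
    hrT _ h (by simp [exitAxiom, Axiom.rnames, Concept.rnames, Role.base])
  have hmark : markAxiom Xb r ∉ T := fun h =>
    hrT _ h (by simp [markAxiom, Axiom.rnames, Concept.rnames, Role.base])
  have hseed : Assertion.ca X0 a ∉ A := fun h => hX0A _ h (by simp [Assertion.cnames])
  have hweights : ∀ τ ∈ T, reductionWT X Xb X0 r s wT τ = wT τ := fun τ hτ => by
    simp only [reductionWT, ne_of_mem_of_not_mem hτ hstart, ne_of_mem_of_not_mem hτ hland,
      ne_of_mem_of_not_mem hτ hexit, ne_of_mem_of_not_mem hτ hmark, or_self, if_false]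
  have hweightsA : ∀ α ∈ A, reductionWA X0 a wA α = wA α := fun α hα =>
    if_neg (ne_of_mem_of_not_mem hα hseed)
  rw [reductionTBox, reductionABox, cost_insert_axiom, cost_insert_axiom, cost_insert_axiom,
    cost_insert_axiom _ _ _ _ _ hmark, cost_insert_assertion _ _ _ _ _ hseed,
    cost_congr_weights T A _ _ I hweights hweightsA]
  · simp [reductionPenalty, reductionWT, reductionWA, startAxiom, landAxiom, exitAxiom,
      markAxiom, hX0, hXb.symm, add_assoc]
  all_goals simp_all [startAxiom, landAxiom, exitAxiom, markAxiom, Ne.symm hXb]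

@[simps]
def reductionModel (I : Interp U) (d : U) (hd : d ∈ I.dom) : Interp U where
  dom := I.dom
  indI b := if b = a then d else I.indI b
  cI B := if B = Xb then ∅ else if B = X0 then {d} else I.cI B
  rI ρ := if ρ = s then {(d, d)} else if ρ = r then {p | p.1 ∈ I.cI X ∧ p.2 = d} else I.rI ρ
  cI_sub B := by
    split_ifs
    · exact Set.empty_subset _
    · exact Set.singleton_subset_iff.2 hd
    · exact I.cI_sub B
  rI_sub ρ p hp := by
    split_ifs at hp
    · obtain rfl := hp
      exact ⟨hd, hd⟩
    · exact ⟨I.cI_sub X hp.1, hp.2 ▸ hd⟩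
    · exact I.rI_sub ρ p hp

variable {X Xb X0 r s a}

lemma reductionModel_proper {I : Interp U} (hI : I.Proper) {d : U} (hd : d ∈ I.dom) :
    (reductionModel X Xb X0 r s a I d hd).Proper := by
  intro b
  by_cases hb : b = a <;> simp [hb, hd, hI b]

lemma cost_reductionModel {T : Finset Axiom} {A : Finset Assertion} {wT : Axiom → ℕ∞}
    {wA : Assertion → ℕ∞} {I : Interp U} {d : U} (hd : d ∈ I.dom)
    (hXbT : ∀ τ ∈ T, Xb ∉ τ.cnames) (hXbA : ∀ α ∈ A, Xb ∉ α.cnames)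
    (hX0T : ∀ τ ∈ T, X0 ∉ τ.cnames) (hX0A : ∀ α ∈ A, X0 ∉ α.cnames)
    (hrT : ∀ τ ∈ T, r ∉ τ.rnames) (hrA : ∀ α ∈ A, r ∉ α.rnames)
    (hsT : ∀ τ ∈ T, s ∉ τ.rnames) (hsA : ∀ α ∈ A, s ∉ α.rnames)
    (haT : ∀ τ ∈ T, a ∉ τ.indNames) (haA : ∀ α ∈ A, a ∉ α.indNames) :
    cost T A wT wA (reductionModel X Xb X0 r s a I d hd) = cost T A wT wA I := by
  refine cost_congr_interp T A wT wA _
    (fun τ hτ => Axiom.vioCount_congr (J := I) (I := reductionModel X Xb X0 r s a I d hd) rfl τ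
      ?_ ?_ ?_)
    (fun α hα => Assertion.sat_congr α ?_ ?_ ?_)
  · intro B hB
    simp [ne_of_mem_of_not_mem hB (hXbT τ hτ), ne_of_mem_of_not_mem hB (hX0T τ hτ)]
  · intro ρ hρ
    simp [ne_of_mem_of_not_mem hρ (hrT τ hτ), ne_of_mem_of_not_mem hρ (hsT τ hτ)]
  · intro b hb
    simp [ne_of_mem_of_not_mem hb (haT τ hτ)]
  · intro B hB
    simp [ne_of_mem_of_not_mem hB (hXbA α hα), ne_of_mem_of_not_mem hB (hX0A α hα)]
  · intro ρ hρ
    simp [ne_of_mem_of_not_mem hρ (hrA α hα), ne_of_mem_of_not_mem hρ (hsA α hα)]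
  · intro b hb
    simp [ne_of_mem_of_not_mem hb (haA α hα)]

lemma reductionPenalty_reductionModel_le_one (hXb : Xb ≠ X) (hX0 : X0 ≠ X) (hXbX0 : Xb ≠ X0)
    (hrs : r ≠ s) {I : Interp U} {d : U} (hd : d ∈ I.cI X) :
    reductionPenalty X Xb X0 r s a (reductionModel X Xb X0 r s a I d (I.cI_sub X hd)) ≤ 1 := by
  set J := reductionModel X Xb X0 r s a I d (I.cI_sub X hd)
  have hdom : d ∈ I.dom := I.cI_sub X hd
  have hstart : (startAxiom X0 s).vioCount J = 0 := by
    rw [startAxiom, Axiom.vioCount_ci_eq_zero_iff]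
    intro x hx
    simp_all [Concept.interp, Role.interp, J, Ne.symm hXbX0]
  have hland : (landAxiom X s).vioCount J = 0 := by
    rw [landAxiom, Axiom.vioCount_ci_eq_zero_iff]
    intro x hx
    simp_all [Concept.interp, Role.interp, J, Ne.symm hXb, Ne.symm hX0]
  have hexit : (exitAxiom X r).vioCount J = 0 := by
    rw [exitAxiom, Axiom.vioCount_ci_eq_zero_iff]
    intro x hx
    simp_all [Concept.interp, Role.interp, J, Ne.symm hXb, Ne.symm hX0]
  have hmark : (markAxiom Xb r).vioCount J ≤ 1 := by
    refine Set.encard_le_one_iff.2 fun x y hx hy => ?_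
    simp only [vioCI, Concept.interp, Role.interp, J, reductionModel_rI, if_neg hrs] at hx hy
    obtain ⟨⟨_, ⟨_, rfl⟩, _⟩, _⟩ := hx
    obtain ⟨⟨_, ⟨_, rfl⟩, _⟩, _⟩ := hy
    rfl
  have hseed : (Assertion.ca X0 a).sat J := by simp [Assertion.sat, J, hXbX0.symm]
  simp [reductionPenalty, hstart, hland, hexit, hseed, hmark]

lemma nonempty_and_one_le_reductionPenalty {J : Interp U} (hXbJ : J.cI Xb = ∅)
    (h : reductionPenalty X Xb X0 r s a J ≠ ⊤) :
    (J.cI X).Nonempty ∧ 1 ≤ reductionPenalty X Xb X0 r s a J := by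
  have holds : ∀ C D, ⊤ * (Axiom.ci C D).vioCount J ≠ ⊤ → C.interp J ⊆ D.interp J :=
    fun C D h => (Axiom.vioCount_ci_eq_zero_iff J C D).1 (not_imp_comm.1 ENat.top_mul h)
  simp only [reductionPenalty, ne_eq, ENat.add_eq_top, not_or] at h
  obtain ⟨⟨⟨⟨hstart, hland⟩, hexit⟩, -⟩, hseed⟩ := h
  have hseed : J.indI a ∈ J.cI X0 := by
    by_contra hn
    simp [Assertion.sat, hn] at hseed
  obtain ⟨e, hae, -⟩ := holds _ _ hstart hseed
  have heX : e ∈ J.cI X := holds _ _ hland ⟨J.indI a, hae, (J.rI_sub s _ hae).1⟩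
  obtain ⟨f, hef, -⟩ := holds _ _ hexit heX
  have hmark : (markAxiom Xb r).vioCount J ≠ 0 := fun h0 => by
    have := (Axiom.vioCount_ci_eq_zero_iff J _ _).1 h0 ⟨e, hef, J.cI_sub X heX⟩
    simp [Concept.interp, hXbJ] at this
  refine ⟨⟨e, heX⟩, ?_⟩
  calc 1 ≤ (markAxiom Xb r).vioCount J := Order.one_le_iff_ne_zero.2 hmark
    _ ≤ _ := le_add_self.trans le_self_add

end Reduction

theorem statement8_general (T : Finset Axiom)
    (A : Finset Assertion) (wT : Axiom → ℕ∞) (wA : Assertion → ℕ∞)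
    (k : ℕ) (X : CName)
    (Xb X0 : CName) (r s : RName) (a : IndName)
    (hXb : Xb ≠ X) (hX0 : X0 ≠ X) (hXbX0 : Xb ≠ X0) (hrs : r ≠ s)
    (hXbT : ∀ τ ∈ T, Xb ∉ Axiom.cnames τ) (hXbA : ∀ α ∈ A, Xb ∉ Assertion.cnames α)
    (hX0T : ∀ τ ∈ T, X0 ∉ Axiom.cnames τ) (hX0A : ∀ α ∈ A, X0 ∉ Assertion.cnames α)
    (hrT : ∀ τ ∈ T, r ∉ Axiom.rnames τ) (hrA : ∀ α ∈ A, r ∉ Assertion.rnames α)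
    (hsT : ∀ τ ∈ T, s ∉ Axiom.rnames τ) (hsA : ∀ α ∈ A, s ∉ Assertion.rnames α)
    (haT : ∀ τ ∈ T, a ∉ Axiom.indNames τ) (haA : ∀ α ∈ A, a ∉ Assertion.indNames α) :
    satP T A wT wA k {QAtom.ca X (Term.var 0)} ↔
      ¬ satC
          (insert (Axiom.ci (Concept.atom X0) (Concept.ex (Role.name s) Concept.top))
            (insert (Axiom.ci (Concept.ex (Role.inv s) Concept.top) (Concept.atom X))
              (insert (Axiom.ci (Concept.atom X) (Concept.ex (Role.name r) Concept.top))
                (insert (Axiom.ci (Concept.ex (Role.inv r) Concept.top) (Concept.atom Xb)) T))))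
          (insert (Assertion.ca X0 a) A)
          (fun τ =>
            if τ = Axiom.ci (Concept.ex (Role.inv r) Concept.top) (Concept.atom Xb) then 1
            else if τ = Axiom.ci (Concept.atom X0) (Concept.ex (Role.name s) Concept.top) ∨
                τ = Axiom.ci (Concept.ex (Role.inv s) Concept.top) (Concept.atom X) ∨
                τ = Axiom.ci (Concept.atom X) (Concept.ex (Role.name r) Concept.top) then ⊤
            else wT τ)
          (fun α => if α = Assertion.ca X0 a then ⊤ else wA α)
          (k + 1) {QAtom.ca Xb (Term.var 0)} := by
  simp only [satP, satC, satQ_ca_var_iff, not_forall, exists_prop,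
    Set.not_nonempty_iff_eq_empty]
  constructor
  · rintro ⟨U, I, hI, hle, d, hd⟩
    set J := reductionModel X Xb X0 r s a I d (I.cI_sub X hd)
    refine ⟨U, J, reductionModel_proper hI _, ?_, by simp [J]⟩
    calc _ = reductionPenalty X Xb X0 r s a J + cost T A wT wA J :=
          cost_reduction X Xb X0 r s a hX0 hXb hX0T hX0A hrT hsT J
      _ ≤ 1 + k := add_le_add (reductionPenalty_reductionModel_le_one hXb hX0 hXbX0 hrs hd)
          ((cost_reductionModel _ hXbT hXbA hX0T hX0A hrT hrA hsT hsA haT haA).trans_le hle)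
      _ = (k + 1 : ℕ) := by push_cast; ring
  · rintro ⟨U, J, hJ, hle, hXbJ⟩
    have hle : reductionPenalty X Xb X0 r s a J + cost T A wT wA J ≤ (k + 1 : ℕ) :=
      (cost_reduction X Xb X0 r s a hX0 hXb hX0T hX0A hrT hsT J).symm.trans_le hle
    obtain ⟨hX, hpen⟩ := nonempty_and_one_le_reductionPenalty hXbJ
      (ne_top_of_le_ne_top (ENat.natCast_ne_top _) (le_self_add.trans hle))
    refine ⟨U, J, hJ, (ENat.add_le_add_iff_left ENat.one_ne_top).1 ?_, hX⟩
    calc 1 + cost T A wT wA J ≤ _ := add_le_add_left hpen _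
      _ ≤ _ := hle
      _ = 1 + k := by push_cast; ring

/-- (Reduction of `IQAₚᵏ` to the complement of `IQA꜀ᵏ⁺¹`, existential
concept query `∃y X(y)`.)  With fresh concept names `Xb` (`= Ā`), `X0` (`= A₀`), fresh
role names `r, s`, a fresh individual name `a`,
`T' = T ∪ {X0 ⊑ ∃s, ∃s⁻ ⊑ X, X ⊑ ∃r, ∃r⁻ ⊑ Xb}`, `A' = A ∪ {X0(a)}`, weight `∞` on the
first three new axioms and on `X0(a)`, and weight `1` on `∃r⁻ ⊑ Xb`:
`(T,A)_ω ⊨ₚᵏ ∃y X(y)` iff `(T',A')_{ω'} ⊭꜀ᵏ⁺¹ ∃y Xb(y)`. -/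
theorem statement8 (T : Finset Axiom) (hcore : IsDLLiteCore T)
    (A : Finset Assertion) (wT : Axiom → ℕ∞) (wA : Assertion → ℕ∞)
    (hwT : ∀ τ ∈ T, 1 ≤ wT τ) (hwA : ∀ α ∈ A, 1 ≤ wA α)
    (k : ℕ) (X : CName)
    (Xb X0 : CName) (r s : RName) (a : IndName)
    (hXb : Xb ≠ X) (hX0 : X0 ≠ X) (hXbX0 : Xb ≠ X0) (hrs : r ≠ s)
    (hXbT : ∀ τ ∈ T, Xb ∉ Axiom.cnames τ) (hXbA : ∀ α ∈ A, Xb ∉ Assertion.cnames α)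
    (hX0T : ∀ τ ∈ T, X0 ∉ Axiom.cnames τ) (hX0A : ∀ α ∈ A, X0 ∉ Assertion.cnames α)
    (hrT : ∀ τ ∈ T, r ∉ Axiom.rnames τ) (hrA : ∀ α ∈ A, r ∉ Assertion.rnames α)
    (hsT : ∀ τ ∈ T, s ∉ Axiom.rnames τ) (hsA : ∀ α ∈ A, s ∉ Assertion.rnames α)
    (haT : ∀ τ ∈ T, a ∉ Axiom.indNames τ) (haA : ∀ α ∈ A, a ∉ Assertion.indNames α) :
    satP T A wT wA k {QAtom.ca X (Term.var 0)} ↔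
      ¬ satC
          (insert (Axiom.ci (Concept.atom X0) (Concept.ex (Role.name s) Concept.top))
            (insert (Axiom.ci (Concept.ex (Role.inv s) Concept.top) (Concept.atom X))
              (insert (Axiom.ci (Concept.atom X) (Concept.ex (Role.name r) Concept.top))
                (insert (Axiom.ci (Concept.ex (Role.inv r) Concept.top) (Concept.atom Xb)) T))))
          (insert (Assertion.ca X0 a) A)
          (fun τ =>
            if τ = Axiom.ci (Concept.ex (Role.inv r) Concept.top) (Concept.atom Xb) then 1
            else if τ = Axiom.ci (Concept.atom X0) (Concept.ex (Role.name s) Concept.top) ∨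
                τ = Axiom.ci (Concept.ex (Role.inv s) Concept.top) (Concept.atom X) ∨
                τ = Axiom.ci (Concept.atom X) (Concept.ex (Role.name r) Concept.top) then ⊤
            else wT τ)
          (fun α => if α = Assertion.ca X0 a then ⊤ else wA α)
          (k + 1) {QAtom.ca Xb (Term.var 0)} :=
  statement8_general T A wT wA k X Xb X0 r s a hXb hX0 hXbX0 hrs hXbT hXbA hX0T hX0A hrT hrA hsT hsA
    haT haA

end DL
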